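/- arXiv:2101.04878 — 3 statements merged into one kernel-verified Lean document; each statement's English description precedes it below -/
import Mathlib

section
/- Suppose σ is invertible, ℙ-preserving, and ergodic, and (P,σ) is a Markov operator cocycle. If h ∈ L¹(Ω×X, ℙ×m) is a nonnegative function with ∫ h d(ℙ×m) = 1 which is a fixed point of the lift operator 𝒫, then for ℙ-almost every ω, the fiber h_ω = h(ω,·) lies in D(X,m), i.e., ∫_X h_ω dm = 1. -/
/-!
Integrating the fixed-point identity `𝒫 h = h` fiberwise, and using that each `P_ω` preserves
integrals, shows that the fiber mass `F ω = ∫ h_ω dm` satisfies `F ω = F (σ⁻¹ ω)` a.e. By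
ergodicity `F` is a.e. constant, and the constant is `∫ F dℙ = ∫ h d(ℙ × m) = 1`.
-/

open MeasureTheory

section FiberIntegral

variable {Ω X : Type*} [MeasurableSpace Ω] [MeasurableSpace X] {ℙ : Measure Ω} {m : Measure X}
  [SFinite ℙ] [SFinite m]

theorem integral_fiber_ae_eq_of_lift {τ : Ω → Ω} (hτ : Measure.QuasiMeasurePreserving τ ℙ ℙ)
    {P : Ω → Lp ℝ 1 m →L[ℝ] Lp ℝ 1 m}
    (hP : ∀ᵐ ω ∂ℙ, ∀ g : Lp ℝ 1 m, ∫ x, P ω g x ∂m = ∫ x, g x ∂m)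
    {φ ψ : Lp ℝ 1 (ℙ.prod m)}
    (hlift : ∀ᵐ ω ∂ℙ, ∀ g : Lp ℝ 1 m,
      (⇑g =ᵐ[m] fun x => φ (τ ω, x)) → (fun x => ψ (ω, x)) =ᵐ[m] ⇑(P (τ ω) g)) :
    ∀ᵐ ω ∂ℙ, ∫ x, ψ (ω, x) ∂m = ∫ x, φ (τ ω, x) ∂m := by
  have hφ_fiber : ∀ᵐ ω ∂ℙ, Integrable (fun x => φ (τ ω, x)) m :=
    hτ.ae (L1.integrable_coeFn φ).prod_right_ae
  filter_upwards [hφ_fiber, hτ.ae hP, hlift] with ω hφω hPω hliftω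
  have hg := hφω.coeFn_toL1
  calc ∫ x, ψ (ω, x) ∂m = ∫ x, P (τ ω) (hφω.toL1 _) x ∂m := integral_congr_ae (hliftω _ hg)
    _ = ∫ x, hφω.toL1 _ x ∂m := hPω _
    _ = ∫ x, φ (τ ω, x) ∂m := integral_congr_ae hg

end FiberIntegral

theorem MeasureTheory.Measure.QuasiMeasurePreserving.comp_ae_eq_of_ae_eq_comp_symm {α β : Type*}
    [MeasurableSpace α] {μ : Measure α} {σ : α ≃ᵐ α}
    (hσ : Measure.QuasiMeasurePreserving σ μ μ) {g : α → β} (hg : g =ᵐ[μ] g ∘ σ.symm) :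
    g ∘ σ =ᵐ[μ] g := by
  filter_upwards [hσ.ae hg] with x hx
  simpa using hx

theorem Ergodic.ae_eq_integral_of_comp_ae_eq {α : Type*} [MeasurableSpace α] {μ : Measure α}
    [IsProbabilityMeasure μ] {f : α → α} (hf : Ergodic f μ) {g : α → ℝ}
    (hgm : AEStronglyMeasurable g μ) (hg : g ∘ f =ᵐ[μ] g) :
    g =ᵐ[μ] fun _ => ∫ x, g x ∂μ := by
  obtain ⟨c, hc⟩ := hf.ae_eq_const_of_ae_eq_comp_ae hgm hg
  have hc_integral : ∫ x, g x ∂μ = c := by simp [integral_congr_ae hc]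
  rwa [hc_integral]

theorem fixed_point_fibers_are_densities_general
    {Ω : Type*} [MeasurableSpace Ω] (ℙ : Measure Ω) [IsProbabilityMeasure ℙ]
    {X : Type*} [MeasurableSpace X] (m : Measure X) [IsProbabilityMeasure m]
    (σ : Ω ≃ᵐ Ω) (hσ : Ergodic σ ℙ)
    (P : Ω → (Lp ℝ 1 m →L[ℝ] Lp ℝ 1 m))
    (hMarkov : ∀ᵐ ω ∂ℙ,
      (∀ g : Lp ℝ 1 m, 0 ≤ᵐ[m] ⇑g → 0 ≤ᵐ[m] ⇑(P ω g)) ∧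
      (∀ g : Lp ℝ 1 m, ∫ x, (P ω g) x ∂m = ∫ x, g x ∂m))
    (Plift : Lp ℝ 1 (ℙ.prod m) →ₗ[ℝ] Lp ℝ 1 (ℙ.prod m))
    (hlift : ∀ φ : Lp ℝ 1 (ℙ.prod m), ∀ᵐ ω ∂ℙ, ∀ g : Lp ℝ 1 m,
      (⇑g =ᵐ[m] fun x => φ (σ.symm ω, x)) →
      ((fun x => (Plift φ) (ω, x)) =ᵐ[m] ⇑(P (σ.symm ω) g)))
    (h : Lp ℝ 1 (ℙ.prod m))
    (hint : ∫ p, h p ∂(ℙ.prod m) = 1)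
    (hfix : Plift h = h) :
    ∀ᵐ ω ∂ℙ, ∫ x, h (ω, x) ∂m = 1 := by
  have hh : Integrable h (ℙ.prod m) := L1.integrable_coeFn h
  set F : Ω → ℝ := fun ω => ∫ x, h (ω, x) ∂m
  have hF_symm : F =ᵐ[ℙ] F ∘ σ.symm := by
    refine integral_fiber_ae_eq_of_lift
      (hσ.toMeasurePreserving.symm σ).quasiMeasurePreserving
      (hMarkov.mono fun _ hω => hω.2) ?_
    simpa only [hfix] using hlift h
  have hF_inv : F ∘ σ =ᵐ[ℙ] F :=
    hσ.toMeasurePreserving.quasiMeasurePreserving.comp_ae_eq_of_ae_eq_comp_symm hF_symm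
  have hF_total : ∫ ω, F ω ∂ℙ = 1 := by rw [← hint, integral_prod _ hh]
  filter_upwards [hσ.ae_eq_integral_of_comp_ae_eq hh.integral_prod_left.aestronglyMeasurable hF_inv]
    with ω hω
  exact hω.trans hF_total

/-- If `σ` is invertible, measure-preserving and ergodic and `h` is a
nonnegative fixed point of the lift operator of a Markov operator cocycle
with total integral one, then a.e. fiber `h_ω = h(ω,·)` is a probability
density: `∫_X h_ω dm = 1` for ℙ-a.e. `ω`. -/
theorem fixed_point_fibers_are_densities
    {Ω : Type*} [MeasurableSpace Ω] (ℙ : Measure Ω) [IsProbabilityMeasure ℙ]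
    {X : Type*} [MeasurableSpace X] (m : Measure X) [IsProbabilityMeasure m]
    (σ : Ω ≃ᵐ Ω) (hσ : Ergodic σ ℙ)
    (P : Ω → (Lp ℝ 1 m →L[ℝ] Lp ℝ 1 m))
    (hMarkov : ∀ᵐ ω ∂ℙ,
      (∀ g : Lp ℝ 1 m, 0 ≤ᵐ[m] ⇑g → 0 ≤ᵐ[m] ⇑(P ω g)) ∧
      (∀ g : Lp ℝ 1 m, ∫ x, (P ω g) x ∂m = ∫ x, g x ∂m))
    (Plift : Lp ℝ 1 (ℙ.prod m) →ₗ[ℝ] Lp ℝ 1 (ℙ.prod m))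
    (hlift : ∀ φ : Lp ℝ 1 (ℙ.prod m), ∀ᵐ ω ∂ℙ, ∀ g : Lp ℝ 1 m,
      (⇑g =ᵐ[m] fun x => φ (σ.symm ω, x)) →
      ((fun x => (Plift φ) (ω, x)) =ᵐ[m] ⇑(P (σ.symm ω) g)))
    (h : Lp ℝ 1 (ℙ.prod m))
    (hpos : 0 ≤ᵐ[ℙ.prod m] ⇑h)
    (hint : ∫ p, h p ∂(ℙ.prod m) = 1)
    (hfix : Plift h = h) :
    ∀ᵐ ω ∂ℙ, ∫ x, h (ω, x) ∂m = 1 :=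
  fixed_point_fibers_are_densities_general ℙ m σ hσ P hMarkov Plift hlift h hint hfix
end

section
/- For a random fibered system satisfying bounded distortion with constant C and the big-image property m(T^{(n)}_{σ^{-n}ω} X^ω_{i₁…i_n}) > c > 0 for all cylinders, the measures of pullbacks of cylinders are uniformly controlled: for every cylinder A of measure m(A) < δ = εc/C and every p ≥ 1, m((T^{(p)}_{σ^{-p}ω})⁻¹ A) < ε; consequently the transfer operator cocycle {ℒ^{(n)}_{σ^{-n}ω} 1_X}_n is uniformly integrable, hence weakly precompact in L¹(X,m), for ℙ-a.e. ω. -/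
open MeasureTheory Filter
open scoped ENNReal

/-- `T^{(n)}_ω = T_{σ^{n-1}ω} ∘ ⋯ ∘ T_ω`, `T^{(0)}_ω = id`. -/
def mapCocycle {Ω X : Type*} (σ : Ω → Ω) (T : Ω → X → X) : ℕ → Ω → X → X
  | 0, _ => id
  | n + 1, ω => mapCocycle σ T n (σ ω) ∘ T ω

/-- The cylinder of depth `n` with itinerary `w`, starting at environment `ω₀`. -/
def cylinderAt {Ω X I : Type*} (σ : Ω → Ω) (T : Ω → X → X) (part : I → Set X)
    (ω₀ : Ω) (n : ℕ) (w : Fin n → I) : Set X :=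
  {x | ∀ k : Fin n, mapCocycle σ T k ω₀ x ∈ part (w k)}

/-- `P_ω^{(n)} = P_{σ^{n-1}ω} ∘ ⋯ ∘ P_ω`, `P_ω^{(0)} = id`. -/
noncomputable def clmCocycle {Ω 𝔛 : Type*} [NormedAddCommGroup 𝔛] [NormedSpace ℝ 𝔛]
    (σ : Ω → Ω) (P : Ω → (𝔛 →L[ℝ] 𝔛)) : ℕ → Ω → (𝔛 →L[ℝ] 𝔛)
  | 0, _ => ContinuousLinearMap.id ℝ 𝔛
  | n + 1, ω => (clmCocycle σ P n (σ ω)).comp (P ω)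

/-- The constant function `1` as an element of `L¹(X,m)`. -/
noncomputable def oneLp {X : Type*} [MeasurableSpace X] (m : Measure X)
    [IsProbabilityMeasure m] : Lp ℝ 1 m :=
  indicatorConstLp 1 MeasurableSet.univ (by simp) (1 : ℝ)

/-- Weak sequential precompactness of a sequence. -/
def WeaklySeqPrecompact {E : Type*} [NormedAddCommGroup E] [NormedSpace ℝ E]
    (u : ℕ → E) : Prop :=
  ∀ φ : ℕ → ℕ, StrictMono φ → ∃ ψ : ℕ → ℕ, StrictMono ψ ∧ ∃ x : E,
    ∀ ℓ : E →L[ℝ] ℝ, Tendsto (fun k => ℓ (u (φ (ψ k)))) atTop (nhds (ℓ x))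

/-!
On a depth-`n` cylinder `Z`, bounded distortion and big images bound the density of
`(T^{(n)})_*(m|_Z)` by `C m(Z) / c`; summing over the partition into cylinders gives
`(T^{(n)})_* m ≤ (C / c) m`. So `ℒ^{(n)} 1`, the density of `(T^{(n)})_* m`, lies between `0`
and `C / c` for every `n`, which yields the smallness of pullbacks and uniform integrability.
A sequence bounded in `L^∞` is bounded in the Hilbert space `L²`, hence weakly sequentially
precompact there, and therefore in `L¹`.
-/

open scoped InnerProductSpace Topology

theorem ENNReal.div_mul_lt_of_lt_mul_div {a b c C : ℝ≥0∞} (hc : c ≠ 0) (h : a < b * c / C) :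
    C / c * a < b := by
  rcases eq_or_ne c ⊤ with rfl | hct
  · have hb : b ≠ 0 := by
      rintro rfl
      simp at h
    simpa [pos_iff_ne_zero] using hb
  · rw [mul_comm, ← mul_div_assoc, ENNReal.div_lt_iff (Or.inl hc) (Or.inl hct)]
    exact ENNReal.mul_lt_of_lt_div h

section WeakCompactness

theorem WeaklySeqPrecompact.map {E F : Type*} [NormedAddCommGroup E] [NormedSpace ℝ E]
    [NormedAddCommGroup F] [NormedSpace ℝ F] {u : ℕ → E} (hu : WeaklySeqPrecompact u)
    (A : E →L[ℝ] F) : WeaklySeqPrecompact (fun n => A (u n)) := by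
  intro φ hφ
  obtain ⟨ψ, hψ, x, hx⟩ := hu φ hφ
  exact ⟨ψ, hψ, A x, fun ℓ => hx (ℓ.comp A)⟩

/-- Sequential Banach–Alaoglu applied in the closed span of the sequence, which is separable,
and transported back to `H` by the Riesz representation and the orthogonal projection. -/
theorem exists_subseq_forall_tendsto_inner {H : Type*} [NormedAddCommGroup H]
    [InnerProductSpace ℝ H] [CompleteSpace H] {u : ℕ → H} {K : ℝ} (hu : ∀ n, ‖u n‖ ≤ K) :
    ∃ ψ : ℕ → ℕ, StrictMono ψ ∧ ∃ x : H, ∀ y : H,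
      Tendsto (fun k => ⟪u (ψ k), y⟫_ℝ) atTop (𝓝 ⟪x, y⟫_ℝ) := by
  set S := (Submodule.span ℝ (Set.range u)).topologicalClosure
  have hmem : ∀ n, u n ∈ S := fun n =>
    Submodule.le_topologicalClosure _ (Submodule.subset_span ⟨n, rfl⟩)
  have : TopologicalSpace.SeparableSpace S :=
    (Set.countable_range u).isSeparable.span.closure.separableSpace
  let w : ℕ → StrongDual ℝ S := fun n => InnerProductSpace.toDual ℝ S ⟨u n, hmem n⟩
  have hw : ∀ n, w n ∈ Metric.closedBall 0 K := fun n =>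
    mem_closedBall_zero_iff.mpr (((InnerProductSpace.toDual ℝ S).norm_map _).trans_le (hu n))
  obtain ⟨φ, -, ψ, hψ, hlim⟩ :=
    WeakDual.isSeqCompact_closedBall ℝ S 0 K (x := fun n => WeakDual.toStrongDual.symm (w n)) hw
  refine ⟨ψ, hψ, ((InnerProductSpace.toDual ℝ S).symm (WeakDual.toStrongDual φ) : H), fun y => ?_⟩
  convert ((WeakDual.eval_continuous (S.orthogonalProjectionOnto y)).tendsto φ).comp hlim using 2
  · simp [w]
  · rw [← Submodule.inner_orthogonalProjectionOnto_eq_of_mem_left,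
      InnerProductSpace.toDual_symm_apply]
    rfl

theorem weaklySeqPrecompact_of_norm_le {H : Type*} [NormedAddCommGroup H]
    [InnerProductSpace ℝ H] [CompleteSpace H] {u : ℕ → H} {K : ℝ} (hu : ∀ n, ‖u n‖ ≤ K) :
    WeaklySeqPrecompact u := by
  intro φ _
  obtain ⟨ψ, hψ, x, hx⟩ := exists_subseq_forall_tendsto_inner fun n => hu (φ n)
  refine ⟨ψ, hψ, x, fun ℓ => ?_⟩
  have hℓ : ∀ z, ⟪z, (InnerProductSpace.toDual ℝ H).symm ℓ⟫_ℝ = ℓ z := fun z => by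
    rw [real_inner_comm, InnerProductSpace.toDual_symm_apply]
  simpa only [hℓ] using hx ((InnerProductSpace.toDual ℝ H).symm ℓ)

noncomputable def MeasureTheory.Lp.inclusion {α E : Type*} [MeasurableSpace α] {μ : Measure α}
    [IsProbabilityMeasure μ] [NormedAddCommGroup E] [NormedSpace ℝ E] {p q : ℝ≥0∞}
    [Fact (1 ≤ p)] [Fact (1 ≤ q)] (hpq : p ≤ q) : Lp E q μ →L[ℝ] Lp E p μ :=
  LinearMap.mkContinuous
    { toFun := AddSubgroup.inclusion (Lp.antitone hpq)
      map_add' := map_add _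
      map_smul' := fun _ _ => rfl } 1
    fun f => by
      rw [one_mul]
      exact ENNReal.toReal_mono (Lp.eLpNorm_ne_top f)
        (eLpNorm_le_eLpNorm_of_exponent_le hpq (Lp.aestronglyMeasurable f))

theorem weaklySeqPrecompact_of_ae_norm_le {X : Type*} [MeasurableSpace X] {m : Measure X}
    [IsProbabilityMeasure m] {u : ℕ → Lp ℝ 1 m} {K : ℝ} (hK : 0 ≤ K)
    (hu : ∀ n, ∀ᵐ x ∂m, ‖u n x‖ ≤ K) : WeaklySeqPrecompact u := by
  have hmem : ∀ n, MemLp (u n) 2 m := fun n =>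
    MemLp.of_bound (Lp.aestronglyMeasurable _) K (hu n)
  have hnorm : ∀ n, ‖(hmem n).toLp _‖ ≤ K := fun n => by
    have hb : ∀ᵐ x ∂m, ‖(hmem n).toLp _ x‖ ≤ K := by
      filter_upwards [(hmem n).coeFn_toLp, hu n] with x hx hux
      rwa [hx]
    simpa [measureUnivNNReal] using Lp.norm_le_of_ae_bound hK hb
  have hu_eq : ∀ n, Lp.inclusion one_le_two ((hmem n).toLp _) = u n := fun n =>
    Lp.ext (hmem n).coeFn_toLp
  simpa only [hu_eq] using
    (weaklySeqPrecompact_of_norm_le hnorm).map (Lp.inclusion (μ := m) (E := ℝ) one_le_two)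

end WeakCompactness

section Density

variable {X : Type*} [MeasurableSpace X] {m μ : Measure X}

theorem measure_le_essSup_rnDeriv_mul [μ.HaveLebesgueDecomposition m] [SFinite m]
    (hμ : μ ≪ m) {s : Set X} (hs : μ sᶜ = 0) (A : Set X) :
    μ A ≤ essSup (μ.rnDeriv m) (m.restrict s) * m A :=
  calc μ A ≤ μ (A ∩ s) + μ (A \ s) := measure_le_inter_add_sdiff μ A s
    _ = ∫⁻ x in A ∩ s, μ.rnDeriv m x ∂m := by
      rw [measure_mono_null (show A \ s ⊆ sᶜ from fun _ hx => hx.2) hs, add_zero,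
        Measure.setLIntegral_rnDeriv hμ]
    _ ≤ ∫⁻ _ in A ∩ s, essSup (μ.rnDeriv m) (m.restrict s) ∂m :=
      lintegral_mono_ae (ae_restrict_of_ae_restrict_of_subset Set.inter_subset_right ae_le_essSup)
    _ ≤ essSup (μ.rnDeriv m) (m.restrict s) * m A := by
      rw [setLIntegral_const]
      gcongr
      exact Set.inter_subset_left

theorem essInf_rnDeriv_mul_le [μ.HaveLebesgueDecomposition m] [SFinite m] (hμ : μ ≪ m)
    (s : Set X) : essInf (μ.rnDeriv m) (m.restrict s) * m s ≤ μ s :=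
  calc essInf (μ.rnDeriv m) (m.restrict s) * m s
      = ∫⁻ _ in s, essInf (μ.rnDeriv m) (m.restrict s) ∂m := (setLIntegral_const _ _).symm
    _ ≤ ∫⁻ x in s, μ.rnDeriv m x ∂m := lintegral_mono_ae ae_essInf_le
    _ = μ s := Measure.setLIntegral_rnDeriv hμ s

/-- The density of `f_* (m|_Z)` is at most `C` times its essential infimum on `f '' Z`, and that
infimum is at most `m Z / c` because the image has measure more than `c`. -/
theorem map_restrict_apply_le_of_distortion [IsFiniteMeasure m] {f : X → X} (hf : Measurable f)
    (hmap : m.map f ≪ m) {Z : Set X} {C c : ℝ≥0∞} (hc : c ≠ 0)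
    (hdist : essSup (((m.restrict Z).map f).rnDeriv m) (m.restrict (f '' Z)) ≤
      C * essInf (((m.restrict Z).map f).rnDeriv m) (m.restrict (f '' Z)))
    (hbig : c < m (f '' Z)) (A : Set X) :
    (m.restrict Z).map f A ≤ C / c * m Z * m A := by
  set ν := (m.restrict Z).map f
  -- `f '' Z` need not be measurable; its measurable hull `U` carries the same restricted measure.
  set U := toMeasurable m (f '' Z)
  have hν : ν ≪ m :=
    (Measure.absolutelyContinuous_of_le (Measure.map_mono Measure.restrict_le_self hf)).trans hmap
  have hU : m.restrict U = m.restrict (f '' Z) :=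
    Measure.restrict_toMeasurable (measure_ne_top _ _)
  have hνU : ν Uᶜ = 0 := by
    rw [Measure.map_apply hf (measurableSet_toMeasurable _ _).compl,
      Measure.restrict_apply (hf (measurableSet_toMeasurable _ _).compl)]
    exact measure_mono_null (fun x hx =>
      hx.1 (subset_toMeasurable _ _ (Set.mem_image_of_mem f hx.2))) measure_empty
  have hinf : essInf (ν.rnDeriv m) (m.restrict (f '' Z)) * c ≤ m Z :=
    calc essInf (ν.rnDeriv m) (m.restrict (f '' Z)) * c
        ≤ essInf (ν.rnDeriv m) (m.restrict U) * m U := by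
          rw [hU, measure_toMeasurable]
          gcongr
      _ ≤ ν Set.univ := (essInf_rnDeriv_mul_le hν U).trans (measure_mono (Set.subset_univ _))
      _ = m Z := by
          rw [Measure.map_apply hf MeasurableSet.univ, Set.preimage_univ,
            Measure.restrict_apply_univ]
  calc ν A ≤ essSup (ν.rnDeriv m) (m.restrict U) * m A := measure_le_essSup_rnDeriv_mul hν hνU A
    _ ≤ C * (m Z / c) * m A := by
      rw [hU]
      gcongr
      exact hdist.trans (mul_le_mul_right
        ((ENNReal.le_div_iff_mul_le (Or.inl hc) (Or.inl (ne_top_of_lt hbig))).2 hinf) C)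
    _ = C / c * m Z * m A := by
      rw [div_eq_mul_inv, div_eq_mul_inv]
      ring

theorem map_le_smul_of_distortion [IsProbabilityMeasure m] {f : X → X} (hf : Measurable f)
    (hmap : m.map f ≪ m) {J : Type*} [Countable J] {Z : J → Set X}
    (hZm : ∀ j, MeasurableSet (Z j)) (hZd : Pairwise (Function.onFun Disjoint Z))
    (hZu : ⋃ j, Z j = Set.univ) {C c : ℝ≥0∞} (hc : c ≠ 0)
    (hdist : ∀ j, (Z j).Nonempty →
      essSup (((m.restrict (Z j)).map f).rnDeriv m) (m.restrict (f '' Z j)) ≤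
        C * essInf (((m.restrict (Z j)).map f).rnDeriv m) (m.restrict (f '' Z j)))
    (hbig : ∀ j, (Z j).Nonempty → c < m (f '' Z j)) :
    m.map f ≤ (C / c) • m := by
  refine Measure.le_iff.2 fun A hA => ?_
  have hpiece : ∀ j, m (f ⁻¹' A ∩ Z j) ≤ C / c * m (Z j) * m A := by
    intro j
    rcases (Z j).eq_empty_or_nonempty with hempty | hne
    · simp [hempty]
    · rw [← Measure.restrict_apply (hf hA), ← Measure.map_apply hf hA]
      exact map_restrict_apply_le_of_distortion hf hmap hc (hdist j hne) (hbig j hne) A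
  calc m.map f A = m (⋃ j, f ⁻¹' A ∩ Z j) := by
        rw [Measure.map_apply hf hA, ← Set.inter_iUnion, hZu, Set.inter_univ]
    _ ≤ ∑' j, C / c * m (Z j) * m A := (measure_iUnion_le _).trans (ENNReal.tsum_le_tsum hpiece)
    _ = ((C / c) • m) A := by
      rw [ENNReal.tsum_mul_right, ENNReal.tsum_mul_left, ← measure_iUnion hZd hZm, hZu,
        measure_univ, mul_one, Measure.smul_apply, smul_eq_mul]

theorem ae_norm_le_of_setIntegral_eq_measureReal [IsFiniteMeasure m] {ν : Measure X}
    {f : X → ℝ} (hf : Integrable f m) (hfν : ∀ A, MeasurableSet A → ∫ x in A, f x ∂m = ν.real A)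
    {κ : ℝ≥0∞} (hκ : κ ≠ ⊤) (hνm : ν ≤ κ • m) : ∀ᵐ x ∂m, ‖f x‖ ≤ κ.toReal := by
  have hnonneg : 0 ≤ᵐ[m] f := ae_nonneg_of_forall_setIntegral_nonneg hf fun A hA _ => by
    rw [hfν A hA]
    exact measureReal_nonneg
  have hle : f ≤ᵐ[m] fun _ => κ.toReal :=
    ae_le_of_forall_setIntegral_le hf (integrable_const _) fun A hA _ => by
      rw [hfν A hA, setIntegral_const, smul_eq_mul, measureReal_def, measureReal_def,
        mul_comm, ← ENNReal.toReal_mul]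
      exact ENNReal.toReal_mono (ENNReal.mul_ne_top hκ (measure_ne_top _ _)) (hνm A)
  filter_upwards [hnonneg, hle] with x hx0 hx1
  rwa [Real.norm_eq_abs, abs_of_nonneg hx0]

theorem exists_forall_setIntegral_lt_of_ae_norm_le {f : ℕ → X → ℝ} {K : ℝ} (hK : 0 ≤ K)
    (hf : ∀ n, ∀ᵐ x ∂m, ‖f n x‖ ≤ K) (ε : ℝ) (hε : 0 < ε) :
    ∃ δ > (0 : ℝ), ∀ A : Set X, m A < ENNReal.ofReal δ → ∀ n, ∫ x in A, f n x ∂m < ε := by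
  refine ⟨ε / (K + 1), by positivity, fun A hA n => ?_⟩
  have hAreal : m.real A < ε / (K + 1) := ENNReal.toReal_lt_of_lt_ofReal hA
  calc ∫ x in A, f n x ∂m ≤ K * m.real A :=
        (Real.le_norm_self _).trans (norm_setIntegral_le_of_norm_le_const_ae
          (hA.trans ENNReal.ofReal_lt_top) (ae_restrict_of_ae (hf n)))
    _ ≤ K * (ε / (K + 1)) := by gcongr
    _ < ε := by
      rw [mul_div_assoc', div_lt_iff₀ (by positivity)]
      linarith

end Density

section Cocycle

variable {Ω X I : Type*} (σ : Ω → Ω) {T : Ω → X → X}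

theorem pairwise_disjoint_cylinderAt {part : I → Set X}
    (hdisj : Pairwise (Function.onFun Disjoint part)) (ω₀ : Ω) (n : ℕ) :
    Pairwise (Function.onFun Disjoint (cylinderAt σ T part ω₀ n)) := by
  intro w w' hww'
  obtain ⟨k, hk⟩ := Function.ne_iff.mp hww'
  exact Set.disjoint_left.2 fun x hx hx' => Set.disjoint_left.1 (hdisj hk) (hx k) (hx' k)

theorem iUnion_cylinderAt {part : I → Set X} (hcover : ⋃ i, part i = Set.univ) (ω₀ : Ω)
    (n : ℕ) : ⋃ w, cylinderAt σ T part ω₀ n w = Set.univ := by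
  refine Set.eq_univ_of_forall fun x => ?_
  have hx : ∀ k : Fin n, ∃ i, mapCocycle σ T k ω₀ x ∈ part i := fun k =>
    Set.mem_iUnion.1 (hcover ▸ Set.mem_univ _)
  choose w hw using hx
  exact Set.mem_iUnion.2 ⟨w, hw⟩

variable [MeasurableSpace X]

theorem measurable_mapCocycle (hT : ∀ ω, Measurable (T ω)) :
    ∀ (n : ℕ) (ω : Ω), Measurable (mapCocycle σ T n ω)
  | 0, _ => measurable_id
  | n + 1, ω => (measurable_mapCocycle hT n (σ ω)).comp (hT ω)

theorem map_mapCocycle_absolutelyContinuous {m : Measure X} (hT : ∀ ω, Measurable (T ω))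
    (hns : ∀ ω, m.map (T ω) ≪ m) : ∀ (n : ℕ) (ω : Ω), m.map (mapCocycle σ T n ω) ≪ m
  | 0, _ => by rw [mapCocycle, Measure.map_id]
  | n + 1, ω => by
    rw [mapCocycle, ← Measure.map_map (measurable_mapCocycle σ hT n (σ ω)) (hT ω)]
    exact ((hns ω).map (measurable_mapCocycle σ hT n (σ ω))).trans
      (map_mapCocycle_absolutelyContinuous hT hns n (σ ω))

theorem measurableSet_cylinderAt (hT : ∀ ω, Measurable (T ω)) {part : I → Set X}
    (hmeas : ∀ i, MeasurableSet (part i)) (ω₀ : Ω) (n : ℕ) (w : Fin n → I) :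
    MeasurableSet (cylinderAt σ T part ω₀ n w) := by
  simp only [cylinderAt, Set.ofPred_forall]
  exact MeasurableSet.iInter fun k => measurable_mapCocycle σ hT k ω₀ (hmeas (w k))

theorem map_mapCocycle_le_smul [Countable I] {m : Measure X} [IsProbabilityMeasure m]
    (hT : ∀ ω, Measurable (T ω)) (hns : ∀ ω, m.map (T ω) ≪ m) {part : I → Set X}
    (hmeas : ∀ i, MeasurableSet (part i)) (hdisj : Pairwise (Function.onFun Disjoint part))
    (hcover : ⋃ i, part i = Set.univ) {ω₀ : Ω} {n : ℕ} {C c : ℝ≥0∞} (hc : c ≠ 0)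
    (hdist : ∀ w : Fin n → I, (cylinderAt σ T part ω₀ n w).Nonempty →
      essSup (((m.restrict (cylinderAt σ T part ω₀ n w)).map (mapCocycle σ T n ω₀)).rnDeriv m)
          (m.restrict (mapCocycle σ T n ω₀ '' cylinderAt σ T part ω₀ n w)) ≤
        C * essInf
          (((m.restrict (cylinderAt σ T part ω₀ n w)).map (mapCocycle σ T n ω₀)).rnDeriv m)
          (m.restrict (mapCocycle σ T n ω₀ '' cylinderAt σ T part ω₀ n w)))
    (hbig : ∀ w : Fin n → I, (cylinderAt σ T part ω₀ n w).Nonempty →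
      c < m (mapCocycle σ T n ω₀ '' cylinderAt σ T part ω₀ n w)) :
    m.map (mapCocycle σ T n ω₀) ≤ (C / c) • m :=
  map_le_smul_of_distortion (measurable_mapCocycle σ hT n ω₀)
    (map_mapCocycle_absolutelyContinuous σ hT hns n ω₀)
    (measurableSet_cylinderAt σ hT hmeas ω₀ n) (pairwise_disjoint_cylinderAt σ hdisj ω₀ n)
    (iUnion_cylinderAt σ hcover ω₀ n) hc hdist hbig

variable {m : Measure X} {L : Ω → (Lp ℝ 1 m →L[ℝ] Lp ℝ 1 m)}

theorem setIntegral_clmCocycle (hT : ∀ ω, Measurable (T ω))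
    (hL : ∀ (ω : Ω) (g : Lp ℝ 1 m) (A : Set X), MeasurableSet A →
      ∫ x in (T ω) ⁻¹' A, g x ∂m = ∫ x in A, (L ω g) x ∂m) :
    ∀ (n : ℕ) (ω : Ω) (g : Lp ℝ 1 m) {A : Set X}, MeasurableSet A →
      ∫ x in mapCocycle σ T n ω ⁻¹' A, g x ∂m = ∫ x in A, clmCocycle σ L n ω g x ∂m
  | 0, _, _, _, _ => rfl
  | n + 1, ω, g, A, hA => by
    rw [mapCocycle, Set.preimage_comp, hL ω g _ (measurable_mapCocycle σ hT n (σ ω) hA),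
      setIntegral_clmCocycle hT hL n (σ ω) (L ω g) hA]
    rfl

theorem setIntegral_clmCocycle_oneLp [IsProbabilityMeasure m] (hT : ∀ ω, Measurable (T ω))
    (hL : ∀ (ω : Ω) (g : Lp ℝ 1 m) (A : Set X), MeasurableSet A →
      ∫ x in (T ω) ⁻¹' A, g x ∂m = ∫ x in A, (L ω g) x ∂m) (n : ℕ) (ω : Ω) {A : Set X}
    (hA : MeasurableSet A) :
    ∫ x in A, clmCocycle σ L n ω (oneLp m) x ∂m = (m.map (mapCocycle σ T n ω)).real A := by
  have hone : oneLp m =ᵐ[m] fun _ => (1 : ℝ) := by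
    simpa [oneLp] using indicatorConstLp_coeFn (p := 1) (hs := MeasurableSet.univ)
      (hμs := measure_ne_top m Set.univ) (c := (1 : ℝ))
  rw [← setIntegral_clmCocycle σ hT hL n ω _ hA, integral_congr_ae (ae_restrict_of_ae hone),
    setIntegral_const, smul_eq_mul, mul_one, measureReal_def, measureReal_def,
    Measure.map_apply (measurable_mapCocycle σ hT n ω) hA]

end Cocycle

theorem random_fibered_system_uniform_integrability_general
    {Ω : Type*} [MeasurableSpace Ω] (ℙ : Measure Ω)
    {X : Type*} [MeasurableSpace X] (m : Measure X) [IsProbabilityMeasure m]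
    {I : Type*} [Countable I]
    (σ : Ω ≃ᵐ Ω)
    (T : Ω → X → X) (hT : ∀ ω, Measurable (T ω))
    (hns : ∀ ω, m.map (T ω) ≪ m)
    (part : I → Set X) (hmeas : ∀ i, MeasurableSet (part i))
    (hdisj : Pairwise (Function.onFun Disjoint part))
    (hcover : (⋃ i, part i) = Set.univ)
    -- bounded distortion with constant C
    (C : ℝ≥0∞) (hCtop : C ≠ ⊤)
    (hdistortion : ∀ᵐ ω ∂ℙ, ∀ (n : ℕ) (w : Fin n → I),
      (cylinderAt σ T part (σ.symm^[n] ω) n w).Nonempty →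
      essSup
        (((m.restrict (cylinderAt σ T part (σ.symm^[n] ω) n w)).map
            (mapCocycle σ T n (σ.symm^[n] ω))).rnDeriv m)
        (m.restrict (mapCocycle σ T n (σ.symm^[n] ω) ''
            cylinderAt σ T part (σ.symm^[n] ω) n w))
      ≤ C *
        essInf
          (((m.restrict (cylinderAt σ T part (σ.symm^[n] ω) n w)).map
              (mapCocycle σ T n (σ.symm^[n] ω))).rnDeriv m)
          (m.restrict (mapCocycle σ T n (σ.symm^[n] ω) ''
              cylinderAt σ T part (σ.symm^[n] ω) n w)))
    -- big images with constant c
    (c : ℝ≥0∞) (hc : 0 < c)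
    (hbig : ∀ᵐ ω ∂ℙ, ∀ (n : ℕ) (w : Fin n → I),
      (cylinderAt σ T part (σ.symm^[n] ω) n w).Nonempty →
      c < m (mapCocycle σ T n (σ.symm^[n] ω) ''
          cylinderAt σ T part (σ.symm^[n] ω) n w))
    -- the fiberwise Perron–Frobenius operators
    (L : Ω → (Lp ℝ 1 m →L[ℝ] Lp ℝ 1 m))
    (hL : ∀ (ω : Ω) (g : Lp ℝ 1 m) (A : Set X), MeasurableSet A →
      ∫ x in (T ω) ⁻¹' A, g x ∂m = ∫ x in A, (L ω g) x ∂m) :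
    ∀ᵐ ω ∂ℙ,
      (∀ ε > (0 : ℝ), ∀ (n : ℕ) (w : Fin n → I),
        m (cylinderAt σ T part (σ.symm^[n] ω) n w) < ENNReal.ofReal ε * c / C →
        ∀ p : ℕ, 1 ≤ p →
          m ((mapCocycle σ T p (σ.symm^[p] ω)) ⁻¹'
              cylinderAt σ T part (σ.symm^[n] ω) n w) < ENNReal.ofReal ε) ∧
      (∀ ε > (0 : ℝ), ∃ δ > (0 : ℝ), ∀ A : Set X, MeasurableSet A →
        m A < ENNReal.ofReal δ → ∀ n : ℕ,
          ∫ x in A, (clmCocycle σ L n (σ.symm^[n] ω) (oneLp m)) x ∂m < ε) ∧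
      WeaklySeqPrecompact
        (fun n : ℕ => clmCocycle σ L n (σ.symm^[n] ω) (oneLp m)) := by
  filter_upwards [hdistortion, hbig] with ω hdist hbigω
  have hmap : ∀ n, m.map (mapCocycle σ T n (σ.symm^[n] ω)) ≤ (C / c) • m := fun n =>
    map_mapCocycle_le_smul σ hT hns hmeas hdisj hcover hc.ne' (hdist n) (hbigω n)
  have hdensity : ∀ n, ∀ᵐ x ∂m,
      ‖clmCocycle σ L n (σ.symm^[n] ω) (oneLp m) x‖ ≤ (C / c).toReal := fun n =>
    ae_norm_le_of_setIntegral_eq_measureReal (L1.integrable_coeFn _)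
      (fun _ hA => setIntegral_clmCocycle_oneLp σ hT hL n _ hA)
      (ENNReal.div_ne_top hCtop hc.ne') (hmap n)
  refine ⟨fun ε _ n w hw p _ => ?_, fun ε hε => ?_,
    weaklySeqPrecompact_of_ae_norm_le ENNReal.toReal_nonneg hdensity⟩
  · calc m (mapCocycle σ T p (σ.symm^[p] ω) ⁻¹' cylinderAt σ T part (σ.symm^[n] ω) n w)
        = m.map (mapCocycle σ T p (σ.symm^[p] ω)) (cylinderAt σ T part (σ.symm^[n] ω) n w) :=
          (Measure.map_apply (measurable_mapCocycle σ hT p _)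
            (measurableSet_cylinderAt σ hT hmeas _ n w)).symm
      _ ≤ C / c * m (cylinderAt σ T part (σ.symm^[n] ω) n w) := hmap p _
      _ < ENNReal.ofReal ε := ENNReal.div_mul_lt_of_lt_mul_div hc.ne' hw
  · obtain ⟨δ, hδ, hsmall⟩ :=
      exists_forall_setIntegral_lt_of_ae_norm_le ENNReal.toReal_nonneg hdensity ε hε
    exact ⟨δ, hδ, fun A _ => hsmall A⟩

/-- For a random fibered system with bounded distortion (constant `C`) and big
images (constant `c`): pullbacks of small cylinders are uniformly small
(`m(A) < εc/C` implies `m((T^{(p)}_{σ^{-p}ω})⁻¹A) < ε`), and consequently the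
transfer operator cocycle `{ℒ^{(n)}_{σ^{-n}ω} 1_X}_n` is uniformly integrable,
hence weakly precompact in `L¹(X,m)`, for ℙ-a.e. `ω`. -/
theorem random_fibered_system_uniform_integrability
    {Ω : Type*} [MeasurableSpace Ω] (ℙ : Measure Ω) [IsProbabilityMeasure ℙ]
    {X : Type*} [MeasurableSpace X] (m : Measure X) [IsProbabilityMeasure m]
    {I : Type*} [Countable I]
    (σ : Ω ≃ᵐ Ω) (hσ : Ergodic σ ℙ)
    (T : Ω → X → X) (hT : ∀ ω, Measurable (T ω))
    (hns : ∀ ω, m.map (T ω) ≪ m)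
    (part : I → Set X) (hmeas : ∀ i, MeasurableSet (part i))
    (hdisj : Pairwise (Function.onFun Disjoint part))
    (hcover : (⋃ i, part i) = Set.univ)
    (hinj : ∀ ω i, Set.InjOn (T ω) (part i))
    -- generator condition: cylinders generate the σ-algebra mod m
    (hgen : ∀ᵐ ω ∂ℙ, ∀ B : Set X, MeasurableSet B → ∀ ε > (0 : ℝ),
      ∃ (k : ℕ) (ws : Fin k → Σ n : ℕ, Fin n → I),
        m (symmDiff B (⋃ j, cylinderAt σ T part (σ.symm^[(ws j).1] ω)
          (ws j).1 (ws j).2)) < ENNReal.ofReal ε)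
    -- bounded distortion with constant C
    (C : ℝ≥0∞) (hC : 1 ≤ C) (hCtop : C ≠ ⊤)
    (hdistortion : ∀ᵐ ω ∂ℙ, ∀ (n : ℕ) (w : Fin n → I),
      (cylinderAt σ T part (σ.symm^[n] ω) n w).Nonempty →
      essSup
        (((m.restrict (cylinderAt σ T part (σ.symm^[n] ω) n w)).map
            (mapCocycle σ T n (σ.symm^[n] ω))).rnDeriv m)
        (m.restrict (mapCocycle σ T n (σ.symm^[n] ω) ''
            cylinderAt σ T part (σ.symm^[n] ω) n w))
      ≤ C *
        essInf
          (((m.restrict (cylinderAt σ T part (σ.symm^[n] ω) n w)).map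
              (mapCocycle σ T n (σ.symm^[n] ω))).rnDeriv m)
          (m.restrict (mapCocycle σ T n (σ.symm^[n] ω) ''
              cylinderAt σ T part (σ.symm^[n] ω) n w)))
    -- big images with constant c
    (c : ℝ≥0∞) (hc : 0 < c)
    (hbig : ∀ᵐ ω ∂ℙ, ∀ (n : ℕ) (w : Fin n → I),
      (cylinderAt σ T part (σ.symm^[n] ω) n w).Nonempty →
      c < m (mapCocycle σ T n (σ.symm^[n] ω) ''
          cylinderAt σ T part (σ.symm^[n] ω) n w))
    -- the fiberwise Perron–Frobenius operators
    (L : Ω → (Lp ℝ 1 m →L[ℝ] Lp ℝ 1 m))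
    (hL : ∀ (ω : Ω) (g : Lp ℝ 1 m) (A : Set X), MeasurableSet A →
      ∫ x in (T ω) ⁻¹' A, g x ∂m = ∫ x in A, (L ω g) x ∂m) :
    ∀ᵐ ω ∂ℙ,
      (∀ ε > (0 : ℝ), ∀ (n : ℕ) (w : Fin n → I),
        m (cylinderAt σ T part (σ.symm^[n] ω) n w) < ENNReal.ofReal ε * c / C →
        ∀ p : ℕ, 1 ≤ p →
          m ((mapCocycle σ T p (σ.symm^[p] ω)) ⁻¹'
              cylinderAt σ T part (σ.symm^[n] ω) n w) < ENNReal.ofReal ε) ∧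
      (∀ ε > (0 : ℝ), ∃ δ > (0 : ℝ), ∀ A : Set X, MeasurableSet A →
        m A < ENNReal.ofReal δ → ∀ n : ℕ,
          ∫ x in A, (clmCocycle σ L n (σ.symm^[n] ω) (oneLp m)) x ∂m < ε) ∧
      WeaklySeqPrecompact
        (fun n : ℕ => clmCocycle σ L n (σ.symm^[n] ω) (oneLp m)) :=
  random_fibered_system_uniform_integrability_general ℙ m σ T hT hns part hmeas hdisj hcover C hCtop
    hdistortion c hc hbig L hL
end

section
/- Suppose σ is an invertible ergodic ℙ-preserving transformation, P_ω are contractions on a Banach space 𝔛 for ℙ-a.e. ω, f,h,g,r ∈ L¹(Ω,𝔛) satisfy f − h = 𝒫g − g + r with ⟦r⟧₁ < ε, and 𝒫h = h. Then limsup_{n→∞} ‖(𝒜ⁿf)(ω) − h(ω)‖_𝔛 < ε for ℙ-a.e. ω, where 𝒜ⁿ is the Cesàro average of the lift operator 𝒫. -/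
/-!
Since `𝒫ᵏh = h`, the Cesàro average of `f - h` telescopes to `(𝒫ⁿg - g)/n` plus the Cesàro
average of `r`. The cocycle is contracting, so `‖(𝒫ᵏu)(ω)‖ ≤ ‖u(σ⁻ᵏω)‖`. Hence the first term is
at most `(‖g(σ⁻ⁿω)‖ + ‖g(ω)‖)/n`, which tends to `0` a.e. by Borel–Cantelli, and the second is at
most the Birkhoff average of `‖r‖` along `σ⁻¹`, which by the maximal ergodic theorem is eventually
below any `c > ⟦r⟧₁`.
-/

open MeasureTheory Filter Function Topology

section MaximalErgodic

variable {Ω : Type*} {T : Ω → Ω} {ψ : Ω → ℝ}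

noncomputable def birkhoffMax (T : Ω → Ω) (ψ : Ω → ℝ) : ℕ → Ω → ℝ
  | 0 => 0
  | n + 1 => birkhoffMax T ψ n ⊔ birkhoffSum T ψ (n + 1)

lemma birkhoffMax_nonneg (n : ℕ) (ω : Ω) : 0 ≤ birkhoffMax T ψ n ω := by
  induction n with
  | zero => exact le_rfl
  | succ n ih => exact ih.trans le_sup_left

lemma birkhoffMax_le_succ (n : ℕ) (ω : Ω) : birkhoffMax T ψ n ω ≤ birkhoffMax T ψ (n + 1) ω :=
  le_sup_left

lemma birkhoffSum_le_birkhoffMax {k n : ℕ} (hkn : k ≤ n) (ω : Ω) :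
    birkhoffSum T ψ k ω ≤ birkhoffMax T ψ n ω := by
  induction n with
  | zero => simp [Nat.le_zero.1 hkn, birkhoffMax]
  | succ n ih =>
    rcases hkn.lt_or_eq with hlt | rfl
    · exact (ih (Nat.lt_succ_iff.1 hlt)).trans le_sup_left
    · exact le_sup_right

lemma exists_birkhoffSum_pos_of_birkhoffMax_pos {n : ℕ} {ω : Ω} (h : 0 < birkhoffMax T ψ n ω) :
    ∃ k, 0 < birkhoffSum T ψ k ω := by
  induction n with
  | zero => exact absurd h (lt_irrefl 0)
  | succ n ih => exact (lt_max_iff.1 h).elim ih fun h => ⟨n + 1, h⟩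

lemma birkhoffMax_le_max_add_comp (n : ℕ) (ω : Ω) :
    birkhoffMax T ψ n ω ≤ max 0 (ψ ω + birkhoffMax T ψ n (T ω)) := by
  induction n with
  | zero => exact le_max_left _ _
  | succ n ih =>
    refine max_le (ih.trans (max_le_max le_rfl ?_)) ?_
    · linarith [birkhoffMax_le_succ (T := T) (ψ := ψ) n (T ω)]
    · rw [birkhoffSum_succ']
      have := birkhoffSum_le_birkhoffMax (T := T) (ψ := ψ) n.le_succ (T ω)
      exact le_max_of_le_right (by linarith)

lemma birkhoffMax_sub_comp_le_indicator (n : ℕ) (ω : Ω) :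
    birkhoffMax T ψ n ω - birkhoffMax T ψ n (T ω) ≤
      {x | 0 < birkhoffMax T ψ n x}.indicator ψ ω := by
  by_cases hpos : 0 < birkhoffMax T ψ n ω
  · rw [Set.indicator_of_mem (s := {x | 0 < birkhoffMax T ψ n x}) hpos]
    linarith [(le_max_iff.1 (birkhoffMax_le_max_add_comp n ω)).resolve_left hpos.not_ge]
  · rw [Set.indicator_of_notMem (s := {x | 0 < birkhoffMax T ψ n x}) hpos]
    linarith [not_lt.1 hpos, birkhoffMax_nonneg (T := T) (ψ := ψ) n (T ω)]

variable [MeasurableSpace Ω] {μ : Measure Ω}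

lemma measurable_birkhoffSum (hT : Measurable T) (hψ : Measurable ψ) (n : ℕ) :
    Measurable (birkhoffSum T ψ n) :=
  Finset.measurable_sum _ fun k _ => hψ.comp (hT.iterate k)

lemma measurable_birkhoffMax (hT : Measurable T) (hψ : Measurable ψ) (n : ℕ) :
    Measurable (birkhoffMax T ψ n) := by
  induction n with
  | zero => exact measurable_const
  | succ n ih => exact ih.sup (measurable_birkhoffSum hT hψ (n + 1))

lemma integrable_birkhoffSum (hT : MeasurePreserving T μ μ) (hψ : Integrable ψ μ) (n : ℕ) :
    Integrable (birkhoffSum T ψ n) μ :=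
  integrable_finsetSum _ fun k _ => (hT.iterate k).integrable_comp_of_integrable hψ

lemma integrable_birkhoffMax (hT : MeasurePreserving T μ μ) (hψ : Integrable ψ μ) (n : ℕ) :
    Integrable (birkhoffMax T ψ n) μ := by
  induction n with
  | zero => exact integrable_zero Ω ℝ μ
  | succ n ih => exact ih.sup (integrable_birkhoffSum hT hψ (n + 1))

theorem setIntegral_birkhoffMax_pos_nonneg (hT : MeasurePreserving T μ μ) (hψm : Measurable ψ)
    (hψ : Integrable ψ μ) (n : ℕ) :
    0 ≤ ∫ ω in {ω | 0 < birkhoffMax T ψ n ω}, ψ ω ∂μ := by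
  have hM := integrable_birkhoffMax hT hψ n
  have hMT : Integrable (fun ω => birkhoffMax T ψ n (T ω)) μ := hT.integrable_comp_of_integrable hM
  have hB : MeasurableSet {ω | 0 < birkhoffMax T ψ n ω} :=
    measurableSet_lt measurable_const (measurable_birkhoffMax hT.measurable hψm n)
  have hcomp : ∫ ω, birkhoffMax T ψ n (T ω) ∂μ = ∫ ω, birkhoffMax T ψ n ω ∂μ := by
    have hMmap : AEStronglyMeasurable (birkhoffMax T ψ n) (μ.map T) := by
      rw [hT.map_eq]; exact hM.aestronglyMeasurable
    rw [← integral_map hT.aemeasurable hMmap, hT.map_eq]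
  rw [← integral_indicator hB]
  calc (0 : ℝ) = ∫ ω, (birkhoffMax T ψ n ω - birkhoffMax T ψ n (T ω)) ∂μ := by
        rw [integral_sub hM hMT, hcomp, sub_self]
    _ ≤ _ := integral_mono (hM.sub hMT) (hψ.indicator hB) (birkhoffMax_sub_comp_le_indicator n)

theorem setIntegral_exists_birkhoffSum_pos_nonneg (hT : MeasurePreserving T μ μ)
    (hψm : Measurable ψ) (hψ : Integrable ψ μ) :
    0 ≤ ∫ ω in {ω | ∃ n, 0 < birkhoffSum T ψ n ω}, ψ ω ∂μ := by
  have hunion : {ω | ∃ n, 0 < birkhoffSum T ψ n ω} = ⋃ n, {ω | 0 < birkhoffMax T ψ n ω} := by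
    ext ω
    simp only [Set.mem_ofPred_eq, Set.mem_iUnion]
    exact ⟨fun ⟨n, hn⟩ => ⟨n, hn.trans_le (birkhoffSum_le_birkhoffMax le_rfl ω)⟩,
      fun ⟨_, hn⟩ => exists_birkhoffSum_pos_of_birkhoffMax_pos hn⟩
  have hmono : Monotone fun n => {ω | 0 < birkhoffMax T ψ n ω} :=
    monotone_nat_of_le_succ fun n ω hω => lt_of_lt_of_le hω (birkhoffMax_le_succ n ω)
  rw [hunion]
  exact ge_of_tendsto
    (tendsto_setIntegral_of_monotone
      (fun n => measurableSet_lt measurable_const (measurable_birkhoffMax hT.measurable hψm n))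
      hmono hψ.integrableOn)
    (Eventually.of_forall (setIntegral_birkhoffMax_pos_nonneg hT hψm hψ))

end MaximalErgodic

section Birkhoff

variable {Ω : Type*} {T : Ω → Ω} {ψ : Ω → ℝ}

lemma bddAbove_range_birkhoffSum_comp_iff (ω : Ω) :
    BddAbove (Set.range fun n => birkhoffSum T ψ n (T ω)) ↔
      BddAbove (Set.range fun n => birkhoffSum T ψ n ω) := by
  simp only [bddAbove_def, Set.forall_mem_range]
  constructor
  · rintro ⟨M, hM⟩
    refine ⟨max 0 (ψ ω + M), fun n => ?_⟩
    cases n with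
    | zero => simp
    | succ n => exact le_max_of_le_right (by linarith [hM n, birkhoffSum_succ' T ψ n ω])
  · rintro ⟨M, hM⟩
    exact ⟨M - ψ ω, fun n => by linarith [hM (n + 1), birkhoffSum_succ' T ψ n ω]⟩

variable [MeasurableSpace Ω] {μ : Measure Ω}

theorem Ergodic.ae_bddAbove_birkhoffSum_of_integral_neg (hT : Ergodic T μ) (hψm : Measurable ψ)
    (hψ : Integrable ψ μ) (hneg : ∫ ω, ψ ω ∂μ < 0) :
    ∀ᵐ ω ∂μ, BddAbove (Set.range fun n => birkhoffSum T ψ n ω) := by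
  set E := {ω | BddAbove (Set.range fun n => birkhoffSum T ψ n ω)}
  have hEm : MeasurableSet E :=
    measurableSet_bddAbove_range (measurable_birkhoffSum hT.measurable hψm)
  have hEinv : T ⁻¹' E = E := Set.ext bddAbove_range_birkhoffSum_comp_iff
  rcases hT.toPreErgodic.ae_empty_or_univ hEm hEinv with hE | hE
  -- If `E` is null, Hopf's inequality integrates `ψ` over a conull set.
  · have hsub : {ω | ∃ n, 0 < birkhoffSum T ψ n ω}ᶜ ⊆ E := fun ω hω =>
      ⟨0, Set.forall_mem_range.2 fun n => not_lt.1 fun h => hω ⟨n, h⟩⟩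
    have hpos : {ω | ∃ n, 0 < birkhoffSum T ψ n ω} =ᵐ[μ] Set.univ :=
      ae_eq_univ.2 (measure_mono_null hsub (ae_eq_empty.1 hE))
    have := setIntegral_exists_birkhoffSum_pos_nonneg hT.toMeasurePreserving hψm hψ
    rw [setIntegral_congr_set hpos, setIntegral_univ] at this
    exact absurd hneg this.not_gt
  · exact hE.mem_iff.mono fun ω hω => hω.2 trivial

theorem Ergodic.ae_eventually_birkhoffAverage_lt [IsProbabilityMeasure μ] (hT : Ergodic T μ)
    {φ : Ω → ℝ} (hφm : Measurable φ) (hφ : Integrable φ μ) {c : ℝ} (hc : ∫ ω, φ ω ∂μ < c) :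
    ∀ᵐ ω ∂μ, ∀ᶠ n in atTop, birkhoffAverage ℝ T φ n ω < c := by
  obtain ⟨c₀, hφc₀, hc₀c⟩ := exists_between hc
  have hψ : Integrable (fun ω => φ ω - c₀) μ := hφ.sub (integrable_const c₀)
  have hneg : ∫ ω, (φ ω - c₀) ∂μ < 0 := by
    rw [integral_sub hφ (integrable_const c₀), integral_const]
    simp only [probReal_univ, smul_eq_mul, one_mul]
    linarith
  filter_upwards [hT.ae_bddAbove_birkhoffSum_of_integral_neg (by fun_prop) hψ hneg] with ω ⟨M, hM⟩
  have hlim : Tendsto (fun n : ℕ => (n : ℝ)⁻¹ * M + c₀) atTop (𝓝 c₀) := by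
    simpa using (tendsto_inv_atTop_nhds_zero_nat.mul_const M).add_const c₀
  filter_upwards [hlim.eventually (gt_mem_nhds hc₀c), eventually_gt_atTop 0]
    with n hn hn0
  have hsum : birkhoffSum T (fun ω => φ ω - c₀) n ω = birkhoffSum T φ n ω - n * c₀ := by
    simp [birkhoffSum, Finset.sum_sub_distrib]
  have hM : birkhoffSum T φ n ω - n * c₀ ≤ M := hsum ▸ hM ⟨n, rfl⟩
  calc birkhoffAverage ℝ T φ n ω
      = (n : ℝ)⁻¹ * (birkhoffSum T φ n ω - n * c₀) + c₀ := by
        rw [birkhoffAverage, smul_eq_mul]; field_simp; ring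
    _ ≤ (n : ℝ)⁻¹ * M + c₀ := by gcongr
    _ < c := hn

end Birkhoff

section BorelCantelli

variable {Ω E : Type*} [MeasurableSpace Ω] {μ : Measure Ω} [IsProbabilityMeasure μ]
  [NormedAddCommGroup E] {T : Ω → Ω}

theorem MeasureTheory.MeasurePreserving.ae_tendsto_norm_comp_iterate_div
    (hT : MeasurePreserving T μ μ) {φ : Ω → E} (hφ : Integrable φ μ) :
    ∀ᵐ ω ∂μ, Tendsto (fun n : ℕ => ‖φ (T^[n] ω)‖ / n) atTop (𝓝 0) := by
  have hrare : ∀ j : ℕ, ∀ᵐ ω ∂μ, ∀ᶠ n : ℕ in atTop, (j + 1) * ‖φ (T^[n] ω)‖ ≤ n := by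
    intro j
    set X : Ω → ℝ := fun ω => (j + 1) * ‖φ ω‖
    have hX : Integrable X μ := hφ.norm.const_mul _
    -- This lemma is stated for the `volume` of a `MeasureSpace`.
    have hsum := @ProbabilityTheory.tsum_prob_mem_Ioi_lt_top Ω ⟨μ⟩ ‹_› X hX fun ω => by positivity
    have hpre : ∀ n : ℕ, μ {ω | X (T^[n] ω) ∈ Set.Ioi (n : ℝ)} = μ {ω | X ω ∈ Set.Ioi (n : ℝ)} :=
      fun n => (hT.iterate n).measure_preimage (hX.aemeasurable.nullMeasurable measurableSet_Ioi)
    filter_upwards [ae_eventually_notMem (s := fun n : ℕ => {ω | X (T^[n] ω) ∈ Set.Ioi (n : ℝ)})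
      (by simp_rw [hpre]; exact hsum.ne)] with ω hω
    filter_upwards [hω] with n hn
    simpa [X] using hn
  filter_upwards [ae_all_iff.2 hrare] with ω hω
  refine tendsto_order.2 ⟨fun a ha => Eventually.of_forall fun n => ha.trans_le (by positivity),
    fun ε hε => ?_⟩
  obtain ⟨j, hj⟩ := exists_nat_one_div_lt hε
  filter_upwards [hω j, eventually_gt_atTop 0] with n hn hn0
  have hn_pos : (0 : ℝ) < n := Nat.cast_pos.2 hn0
  rw [div_lt_iff₀ hn_pos]
  rw [div_lt_iff₀ (by positivity)] at hj
  nlinarith [norm_nonneg (φ (T^[n] ω))]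

end BorelCantelli

theorem Module.End.sum_range_pow_apply_coboundary {R M : Type*} [Ring R] [AddCommGroup M]
    [Module R M] (L : Module.End R M) (g r : M) (n : ℕ) :
    ∑ k ∈ Finset.range n, (L ^ k) (L g - g + r) =
      (L ^ n) g - g + ∑ k ∈ Finset.range n, (L ^ k) r := by
  have hstep : ∀ k, (L ^ k) (L g - g + r) = ((L ^ (k + 1)) g - (L ^ k) g) + (L ^ k) r := by
    intro k
    rw [map_add, map_sub, pow_succ, Module.End.mul_apply]
  rw [Finset.sum_congr rfl fun k _ => hstep k, Finset.sum_add_distrib,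
    Finset.sum_range_sub (fun k => (L ^ k) g), pow_zero, Module.End.one_apply]

theorem Module.End.sum_range_pow_apply_sub_of_apply_eq {R M : Type*} [Ring R] [AddCommGroup M]
    [Module R M] {L : Module.End R M} {h : M} (hfix : L h = h) (f : M) (n : ℕ) :
    ∑ k ∈ Finset.range n, (L ^ k) (f - h) = ∑ k ∈ Finset.range n, (L ^ k) f - n • h := by
  simp only [map_sub, Module.End.pow_apply, iterate_fixed hfix, Finset.sum_sub_distrib,
    Finset.sum_const, Finset.card_range]

section Cocycle

variable {Ω E : Type*} [MeasurableSpace Ω] {μ : Measure Ω} [NormedAddCommGroup E]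
  {p : ENNReal} {T : Ω → Ω}

lemma ae_norm_iterate_apply_le (hT : Measure.QuasiMeasurePreserving T μ μ) {L : Lp E p μ → Lp E p μ}
    (hL : ∀ u, ∀ᵐ ω ∂μ, ‖L u ω‖ ≤ ‖u (T ω)‖) (u : Lp E p μ) (k : ℕ) :
    ∀ᵐ ω ∂μ, ‖L^[k] u ω‖ ≤ ‖u (T^[k] ω)‖ := by
  induction k with
  | zero => exact ae_of_all _ fun ω => le_rfl
  | succ k ih =>
    filter_upwards [hL (L^[k] u), hT.ae ih] with ω h1 h2
    rw [iterate_succ_apply', iterate_succ_apply]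
    exact h1.trans h2

theorem ae_norm_sum_pow_apply_coboundary_le {R : Type*} [Ring R] [Module R (Lp E p μ)]
    (hT : Measure.QuasiMeasurePreserving T μ μ) {L : Module.End R (Lp E p μ)}
    (hL : ∀ u, ∀ᵐ ω ∂μ, ‖L u ω‖ ≤ ‖u (T ω)‖) (g r : Lp E p μ) (n : ℕ) :
    ∀ᵐ ω ∂μ, ‖(∑ k ∈ Finset.range n, (L ^ k) (L g - g + r)) ω‖ ≤
      ‖g (T^[n] ω)‖ + ‖g ω‖ + birkhoffSum T (fun ω => ‖r ω‖) n ω := by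
  have hpow : ∀ u k, ∀ᵐ ω ∂μ, ‖(L ^ k) u ω‖ ≤ ‖u (T^[k] ω)‖ := fun u k => by
    rw [Module.End.coe_pow]
    exact ae_norm_iterate_apply_le hT hL u k
  rw [L.sum_range_pow_apply_coboundary]
  filter_upwards [Lp.coeFn_add ((L ^ n) g - g) (∑ k ∈ Finset.range n, (L ^ k) r),
    Lp.coeFn_sub ((L ^ n) g) g, Lp.coeFn_fun_finsetSum (Finset.range n) fun k => (L ^ k) r,
    hpow g n, ae_all_iff.2 (hpow r)] with ω hadd hsub hsum hg hr
  rw [hadd, Pi.add_apply, hsub, Pi.sub_apply, hsum]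
  calc ‖(L ^ n) g ω - g ω + ∑ k ∈ Finset.range n, (L ^ k) r ω‖
      ≤ ‖(L ^ n) g ω‖ + ‖g ω‖ + ∑ k ∈ Finset.range n, ‖(L ^ k) r ω‖ :=
        (norm_add_le _ _).trans (add_le_add (norm_sub_le _ _) (norm_sum_le _ _))
    _ ≤ _ := add_le_add (add_le_add_left hg _) (Finset.sum_le_sum fun k _ => hr k)

theorem ae_norm_cesaro_sub_le [Fact (1 ≤ p)] [NormedSpace ℝ E]
    (hT : Measure.QuasiMeasurePreserving T μ μ) {L : Module.End ℝ (Lp E p μ)}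
    (hL : ∀ u, ∀ᵐ ω ∂μ, ‖L u ω‖ ≤ ‖u (T ω)‖) {f h g r : Lp E p μ}
    (hdecomp : f - h = L g - g + r) (hfix : L h = h) :
    ∀ᵐ ω ∂μ, ∀ n : ℕ, n ≠ 0 →
      ‖((n : ℝ)⁻¹ • ∑ k ∈ Finset.range n, (L ^ k) f) ω - h ω‖ ≤
        (‖g (T^[n] ω)‖ + ‖g ω‖) / n + birkhoffAverage ℝ T (fun ω => ‖r ω‖) n ω := by
  refine ae_all_iff.2 fun n => ?_
  set S := ∑ k ∈ Finset.range n, (L ^ k) f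
  set D := ∑ k ∈ Finset.range n, (L ^ k) (L g - g + r)
  filter_upwards [Lp.coeFn_sub ((n : ℝ)⁻¹ • S) h, Lp.coeFn_smul (n : ℝ)⁻¹ D,
    ae_norm_sum_pow_apply_coboundary_le hT hL g r n] with ω hsub hsmul hbound hn
  have hcesaro : (n : ℝ)⁻¹ • S - h = (n : ℝ)⁻¹ • D := by
    have hD : D = S - n • h := by
      rw [← L.sum_range_pow_apply_sub_of_apply_eq hfix, hdecomp]
    rw [hD, smul_sub, ← Nat.cast_smul_eq_nsmul ℝ, smul_smul,
      inv_mul_cancel₀ (Nat.cast_ne_zero.2 hn), one_smul]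
  calc ‖((n : ℝ)⁻¹ • S) ω - h ω‖ = (n : ℝ)⁻¹ * ‖D ω‖ := by
        rw [← Pi.sub_apply, ← hsub, hcesaro, hsmul, Pi.smul_apply, norm_smul, norm_inv,
          Real.norm_natCast]
    _ ≤ (n : ℝ)⁻¹ * (‖g (T^[n] ω)‖ + ‖g ω‖ + birkhoffSum T (fun ω => ‖r ω‖) n ω) := by gcongr
    _ = _ := by rw [birkhoffAverage, smul_eq_mul]; ring

end Cocycle

/-- If `f − h = 𝒫g − g + r` with `⟦r⟧₁ < ε` and `𝒫h = h`, where `𝒫` is the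
lift of an a.e. contraction cocycle over an invertible ergodic base, then the
Cesàro averages satisfy `limsup_n ‖(𝒜ⁿf)(ω) − h(ω)‖ < ε` for ℙ-a.e. `ω`. -/
theorem cesaro_limsup_lt_of_coboundary
    {Ω : Type*} [MeasurableSpace Ω] (ℙ : Measure Ω) [IsProbabilityMeasure ℙ]
    {𝔛 : Type*} [NormedAddCommGroup 𝔛] [NormedSpace ℝ 𝔛]
    (σ : Ω ≃ᵐ Ω) (hσ : Ergodic σ ℙ)
    (P : Ω → (𝔛 →L[ℝ] 𝔛)) (hcontr : ∀ᵐ ω ∂ℙ, ‖P ω‖ ≤ 1)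
    (Plift : Lp 𝔛 1 ℙ →ₗ[ℝ] Lp 𝔛 1 ℙ)
    (hlift : ∀ u : Lp 𝔛 1 ℙ,
      ⇑(Plift u) =ᵐ[ℙ] fun ω => P (σ.symm ω) (u (σ.symm ω)))
    (ε : ℝ) (f h g r : Lp 𝔛 1 ℙ)
    (hdecomp : f - h = Plift g - g + r)
    (hr : ‖r‖ < ε)
    (hfix : Plift h = h) :
    ∀ᵐ ω ∂ℙ,
      Filter.limsup
        (fun n : ℕ =>
          ‖(((n : ℝ)⁻¹ • ∑ k ∈ Finset.range n, (Plift ^ k) f : Lp 𝔛 1 ℙ)) ω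
            - h ω‖) atTop < ε := by
  have hT : Ergodic σ.symm ℙ := hσ.symm
  have hL : ∀ u : Lp 𝔛 1 ℙ, ∀ᵐ ω ∂ℙ, ‖Plift u ω‖ ≤ ‖u (σ.symm ω)‖ := fun u => by
    filter_upwards [hlift u, hT.quasiMeasurePreserving.ae hcontr] with ω hω hP
    rw [hω]
    simpa using (P (σ.symm ω)).le_of_opNorm_le hP (u (σ.symm ω))
  obtain ⟨c, hrc, hcε⟩ := exists_between hr
  have hr_int : ∫ ω, ‖r ω‖ ∂ℙ < c := by rwa [← L1.norm_eq_integral_norm]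
  filter_upwards [ae_norm_cesaro_sub_le hT.quasiMeasurePreserving hL hdecomp hfix,
    hT.ae_eventually_birkhoffAverage_lt (Lp.stronglyMeasurable r).norm.measurable
      (L1.integrable_coeFn r).norm hr_int,
    hT.toMeasurePreserving.ae_tendsto_norm_comp_iterate_div (L1.integrable_coeFn g)]
    with ω hbound hrω hgω
  have hg : Tendsto (fun n : ℕ => (‖g (σ.symm^[n] ω)‖ + ‖g ω‖) / n) atTop (𝓝 0) := by
    simpa [add_div] using hgω.add (tendsto_const_div_atTop_nhds_zero_nat ‖g ω‖)
  refine (limsup_le_of_le (isCoboundedUnder_le_of_le atTop fun n => norm_nonneg _) ?_).trans_lt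
    (by linarith : c + (ε - c) / 2 < ε)
  filter_upwards [hg.eventually (gt_mem_nhds (by linarith : (0 : ℝ) < (ε - c) / 2)), hrω,
    eventually_ne_atTop 0] with n hgn hrn hn
  linarith [hbound n hn]
end
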